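/- Let b ≥ 2 be an integer and let a = (a_j)_{j≥1} be a nondecreasing sequence of real weights such that a_j ≥ a·j^r for all j > A, where a > 0, r > 0 and A ∈ ℕ₀. Set n_j = #{i ∈ ℕ : i + a_j ≤ 1}, S_∞ = (b−1)·∑_{j≥1} n_j (a finite sum under this assumption), and C = (b−1)·(A + r^{−1}·Γ(1/r)·a^{−1/r}) + S_∞ + 1. Then for every s ∈ ℕ and all M ≥ 0: V_{s,a}(M) ≤ exp( C · M^{(r+1)/(2r+1)} ). -/

import Mathlib

open MeasureTheory Matrix Filter
open scoped ENNReal BigOperators Topology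

noncomputable section

/-- The `b`-adic digit of `k : ℕ` at place `b^i` (i.e. the `(i+1)`-st digit). -/
def natDigit (b k i : ℕ) : ℕ := k / b ^ i % b

/-- The `(i+1)`-st `b`-adic digit of a real number `x ∈ [0,1)`
(using the expansion in which infinitely many digits differ from `b-1`). -/
def realDigit (b : ℕ) (x : ℝ) (i : ℕ) : ℕ := (⌊x * (b : ℝ) ^ (i + 1)⌋ % (b : ℤ)).toNat

/-- The `k`-th one-dimensional `b`-adic Walsh function. -/
def wal1 (b k : ℕ) (x : ℝ) : ℂ :=
  Complex.exp (2 * Real.pi * Complex.I / (b : ℂ) *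
    ((∑ i ∈ Finset.range k, natDigit b k i * realDigit b x i : ℕ) : ℂ))

/-- The `k`-th `s`-dimensional `b`-adic Walsh function. -/
def wal (b : ℕ) {s : ℕ} (k : Fin s → ℕ) (x : Fin s → ℝ) : ℂ :=
  ∏ j, wal1 b (k j) (x j)

/-- The unit cube `[0,1)^s`. -/
def unitCube (s : ℕ) : Set (Fin s → ℝ) := Set.univ.pi fun _ => Set.Ico (0 : ℝ) 1

/-- The `k`-th Walsh coefficient of `f`. -/
def walshCoeff (b : ℕ) {s : ℕ} (f : (Fin s → ℝ) → ℝ) (k : Fin s → ℕ) : ℂ :=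
  ∫ x in unitCube s, (f x : ℂ) * (starRingEnd ℂ) (wal b k x)

/-- The generalized Dick weight `μ_a(k)`, one-dimensional case. -/
def dickWt (b : ℕ) (a : ℝ) (k : ℕ) : ℝ :=
  ∑ i ∈ Finset.range k, if natDigit b k i ≠ 0 then ((i : ℝ) + 1 + a) else 0

/-- The generalized Dick weight `μ_a(k)` for vectors. -/
def dickWtV (b : ℕ) {s : ℕ} (a : Fin s → ℝ) (k : Fin s → ℕ) : ℝ :=
  ∑ j, dickWt b (a j) (k j)

/-- The modified Dick weight `μ'_a(k)`, one-dimensional case. -/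
def mdickWt (b : ℕ) (a : ℝ) (k : ℕ) : ℝ :=
  ∑ i ∈ Finset.range k, if natDigit b k i ≠ 0 then max ((i : ℝ) + 1 + a) 1 else 0

/-- The modified Dick weight `μ'_a(k)` for vectors. -/
def mdickWtV (b : ℕ) {s : ℕ} (a : Fin s → ℝ) (k : Fin s → ℕ) : ℝ :=
  ∑ j, mdickWt b (a j) (k j)

/-- Digitwise subtraction modulo `b` of natural numbers. -/
def dsub (b k k' : ℕ) : ℕ :=
  ∑ i ∈ Finset.range (k + k' + 1), ((natDigit b k i + (b - natDigit b k' i)) % b) * b ^ i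

/-- The integral of `f` over the unit cube. -/
def intBox (s : ℕ) (f : (Fin s → ℝ) → ℝ) : ℝ := ∫ x in unitCube s, f x

/-- Membership in the Walsh space `W_{s,a}`: `f` equals its (convergent) Walsh series
and has finite norm. -/
def MemW (b : ℕ) {s : ℕ} (a : Fin s → ℝ) (f : (Fin s → ℝ) → ℝ) : Prop :=
  (∀ x ∈ unitCube s, HasSum (fun k : Fin s → ℕ => walshCoeff b f k * wal b k x) ((f x : ℂ))) ∧
  BddAbove (Set.range fun k : Fin s → ℕ => ‖walshCoeff b f k‖ * (b : ℝ) ^ dickWtV b a k)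

/-- The norm of the Walsh space `W_{s,a}`. -/
def normW (b : ℕ) {s : ℕ} (a : Fin s → ℝ) (f : (Fin s → ℝ) → ℝ) : ℝ :=
  ⨆ k : Fin s → ℕ, ‖walshCoeff b f k‖ * (b : ℝ) ^ dickWtV b a k

/-- Membership in the modified Walsh space `W'_{s,a}`. -/
def MemW' (b : ℕ) {s : ℕ} (a : Fin s → ℝ) (f : (Fin s → ℝ) → ℝ) : Prop :=
  (∀ x ∈ unitCube s, HasSum (fun k : Fin s → ℕ => walshCoeff b f k * wal b k x) ((f x : ℂ))) ∧
  BddAbove (Set.range fun k : Fin s → ℕ => ‖walshCoeff b f k‖ * (b : ℝ) ^ mdickWtV b a k)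

/-- The norm of the modified Walsh space `W'_{s,a}`. -/
def normW' (b : ℕ) {s : ℕ} (a : Fin s → ℝ) (f : (Fin s → ℝ) → ℝ) : ℝ :=
  ⨆ k : Fin s → ℕ, ‖walshCoeff b f k‖ * (b : ℝ) ^ mdickWtV b a k

/-- The worst-case error of the algorithm `A` over the unit ball of `(H, N)`. -/
def worstErr (s : ℕ) (H : Set ((Fin s → ℝ) → ℝ)) (N : ((Fin s → ℝ) → ℝ) → ℝ)
    (A : ((Fin s → ℝ) → ℝ) → ℝ) : ℝ≥0∞ :=
  ⨆ (f : (Fin s → ℝ) → ℝ) (_ : f ∈ H) (_ : N f ≤ 1), ENNReal.ofReal |intBox s f - A f|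

/-- The `n`-th minimal worst-case error over all algorithms using `n` function values
at points of the unit cube. -/
def minErr (n s : ℕ) (H : Set ((Fin s → ℝ) → ℝ)) (N : ((Fin s → ℝ) → ℝ) → ℝ) : ℝ≥0∞ :=
  ⨅ (t : Fin n → Fin s → ℝ) (_ : ∀ i, t i ∈ unitCube s) (φ : (Fin n → ℝ) → ℝ),
    worstErr s H N fun f => φ fun i => f (t i)

/-- Partial derivative in the `j`-th coordinate. -/
def pd {s : ℕ} (j : Fin s) (f : (Fin s → ℝ) → ℝ) : (Fin s → ℝ) → ℝ :=
  fun x => deriv (fun t => f (Function.update x j t)) (x j)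

/-- The mixed partial derivative `f^{(α)}`. -/
def mpd {s : ℕ} (α : Fin s → ℕ) (f : (Fin s → ℝ) → ℝ) : (Fin s → ℝ) → ℝ :=
  (List.finRange s).foldr (fun j g => (pd j)^[α j] g) f

/-- Membership in the space `S_{s,u}` of smooth functions. -/
def MemS {s : ℕ} (u : Fin s → ℝ) (f : (Fin s → ℝ) → ℝ) : Prop :=
  ContDiff ℝ (⊤ : ℕ∞) f ∧
  BddAbove (Set.range fun α : Fin s → ℕ =>
    (∫ x in unitCube s, |mpd α f x|) / ∏ j, u j ^ α j)

/-- The norm of the space `S_{s,u}`. -/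
def normS {s : ℕ} (u : Fin s → ℝ) (f : (Fin s → ℝ) → ℝ) : ℝ :=
  ⨆ α : Fin s → ℕ, (∫ x in unitCube s, |mpd α f x|) / ∏ j, u j ^ α j

/-- The column vector of the first `m` `b`-adic digits of `k`. -/
def trunc (b m k : ℕ) : Fin m → ZMod b := fun i => (natDigit b k (i : ℕ) : ZMod b)

/-- The `m`-th point of the digital net determined by generating matrices `G`. -/
def netPoint (b : ℕ) {s l d : ℕ} (G : Fin s → Matrix (Fin l) (Fin d) (ZMod b)) (m : ℕ) :
    Fin s → ℝ :=
  fun j => ∑ i : Fin l, (((G j).mulVec (trunc b d m)) i).val / (b : ℝ) ^ ((i : ℕ) + 1)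

/-- The dual net of the digital net determined by `G`. -/
def dualNet (b : ℕ) {s l d : ℕ} (G : Fin s → Matrix (Fin l) (Fin d) (ZMod b)) :
    Set (Fin s → ℕ) :=
  {k | ∑ j, (G j)ᵀ.mulVec (trunc b l (k j)) = 0}

/-- The QMC algorithm given by the digital net with generating matrices `G`. -/
def qmcNet (b : ℕ) {s l d : ℕ} (G : Fin s → Matrix (Fin l) (Fin d) (ZMod b))
    (f : (Fin s → ℝ) → ℝ) : ℝ :=
  ((b : ℝ) ^ d)⁻¹ * ∑ m ∈ Finset.range (b ^ d), f (netPoint b G m)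

/-- `n_j = #{i ∈ ℕ : i + a ≤ 1}` (with `i` ranging over positive integers). -/
def negCount (a : ℝ) : ℕ := Set.ncard {i : ℕ | 0 < i ∧ (i : ℝ) + a ≤ 1}



section AuxStatement17

open Set MeasureTheory

lemma natDigit_eq_zero_of_lt_pow {b k i : ℕ} (h : k < b ^ i) : natDigit b k i = 0 := by
  unfold natDigit
  rw [Nat.div_eq_of_lt h, Nat.zero_mod]

lemma natDigit_eq_zero_of_le {b k i : ℕ} (hb : 2 ≤ b) (h : k ≤ i) : natDigit b k i = 0 :=
  natDigit_eq_zero_of_lt_pow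
    (lt_of_lt_of_le (lt_of_le_of_lt h (Nat.lt_two_pow_self (n := i))) (Nat.pow_le_pow_left hb i))

lemma natDigit_add_mul_pow_lt {b : ℕ} (hb : 2 ≤ b) {m t D i : ℕ} (hi : i < D) :
    natDigit b (m + t * b ^ D) i = natDigit b m i := by
  have hbp : 0 < b ^ i := Nat.pow_pos (by omega)
  have hD : b ^ D = (b ^ (D - i - 1) * b) * b ^ i := by
    rw [← pow_succ, ← pow_add]
    congr 1
    omega
  unfold natDigit
  rw [hD, ← mul_assoc, Nat.add_mul_div_right _ _ hbp, ← mul_assoc t,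
    Nat.add_mul_mod_self_right]

lemma natDigit_add_mul_pow_self {b : ℕ} (hb : 2 ≤ b) {m t D : ℕ} (hm : m < b ^ D) (ht : t < b) :
    natDigit b (m + t * b ^ D) D = t := by
  have hbp : 0 < b ^ D := Nat.pow_pos (by omega)
  unfold natDigit
  rw [Nat.add_mul_div_right _ _ hbp, Nat.div_eq_of_lt hm, Nat.zero_add, Nat.mod_eq_of_lt ht]

lemma mdickWt_eq_sum_range {b : ℕ} (hb : 2 ≤ b) (a : ℝ) {k D : ℕ} (h : k < b ^ D) :
    mdickWt b a k =
      ∑ i ∈ Finset.range D, if natDigit b k i ≠ 0 then max ((i : ℝ) + 1 + a) 1 else 0 := by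
  have h1 : mdickWt b a k = ∑ i ∈ Finset.range (max k D),
      if natDigit b k i ≠ 0 then max ((i : ℝ) + 1 + a) 1 else 0 := by
    refine Finset.sum_subset (Finset.range_subset_range.mpr (le_max_left k D)) ?_
    intro i _ hik
    rw [Finset.mem_range, not_lt] at hik
    simp [natDigit_eq_zero_of_le hb hik]
  have h2 : (∑ i ∈ Finset.range D, if natDigit b k i ≠ 0 then max ((i : ℝ) + 1 + a) 1 else 0)
      = ∑ i ∈ Finset.range (max k D),
        if natDigit b k i ≠ 0 then max ((i : ℝ) + 1 + a) 1 else 0 := by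
    refine Finset.sum_subset (Finset.range_subset_range.mpr (le_max_right k D)) ?_
    intro i _ hik
    rw [Finset.mem_range, not_lt] at hik
    have : k < b ^ i := lt_of_lt_of_le h (Nat.pow_le_pow_right (by omega) hik)
    simp [natDigit_eq_zero_of_lt_pow this]
  rw [h1, h2]

lemma sum_prod_digits {b : ℕ} (hb : 2 ≤ b) (h : ℕ → ℕ → ℝ) :
    ∀ D : ℕ, ∑ k ∈ Finset.range (b ^ D), ∏ i ∈ Finset.range D, h i (natDigit b k i)
      = ∏ i ∈ Finset.range D, ∑ t ∈ Finset.range b, h i t := by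
  intro D
  induction D with
  | zero => simp
  | succ D ih =>
    have hbp : 0 < b ^ D := Nat.pow_pos (by omega)
    have step : ∑ k ∈ Finset.range (b ^ (D + 1)), ∏ i ∈ Finset.range (D + 1), h i (natDigit b k i)
        = ∑ p ∈ Finset.range (b ^ D) ×ˢ Finset.range b,
            ∏ i ∈ Finset.range (D + 1), h i (natDigit b (p.1 + p.2 * b ^ D) i) := by
      refine Finset.sum_nbij' (fun k => (k % b ^ D, k / b ^ D)) (fun p => p.1 + p.2 * b ^ D)
        ?_ ?_ ?_ ?_ ?_
      · intro k hk
        rw [Finset.mem_range] at hk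
        rw [Finset.mem_product, Finset.mem_range, Finset.mem_range]
        constructor
        · exact Nat.mod_lt _ hbp
        · rw [Nat.div_lt_iff_lt_mul hbp]
          calc k < b ^ (D + 1) := hk
            _ = b * b ^ D := by rw [pow_succ]; ring
      · intro p hp
        rw [Finset.mem_product, Finset.mem_range, Finset.mem_range] at hp
        rw [Finset.mem_range, pow_succ]
        calc p.1 + p.2 * b ^ D < b ^ D + p.2 * b ^ D := by omega
          _ = (p.2 + 1) * b ^ D := by ring
          _ ≤ b * b ^ D := Nat.mul_le_mul_right _ (by omega)
          _ = b ^ D * b := by ring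
      · intro k _
        simp [Nat.mod_add_div']
      · intro p hp
        rw [Finset.mem_product, Finset.mem_range, Finset.mem_range] at hp
        have h1 : (p.1 + p.2 * b ^ D) % b ^ D = p.1 := by
          rw [Nat.add_mul_mod_self_right, Nat.mod_eq_of_lt hp.1]
        have h2 : (p.1 + p.2 * b ^ D) / b ^ D = p.2 := by
          rw [Nat.add_mul_div_right _ _ hbp, Nat.div_eq_of_lt hp.1, Nat.zero_add]
        simp [h1, h2]
      · intro k _
        congr 1
        ext i
        congr 1
        rw [Nat.mod_add_div']
    rw [step, Finset.sum_product]
    have inner : ∀ m ∈ Finset.range (b ^ D), ∀ t ∈ Finset.range b,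
        ∏ i ∈ Finset.range (D + 1), h i (natDigit b (m + t * b ^ D) i)
          = (∏ i ∈ Finset.range D, h i (natDigit b m i)) * h D t := by
      intro m hm t ht
      rw [Finset.mem_range] at hm ht
      rw [Finset.prod_range_succ, natDigit_add_mul_pow_self hb hm ht]
      congr 1
      refine Finset.prod_congr rfl fun i hi => ?_
      rw [Finset.mem_range] at hi
      rw [natDigit_add_mul_pow_lt hb hi]
    calc ∑ m ∈ Finset.range (b ^ D), ∑ t ∈ Finset.range b,
          ∏ i ∈ Finset.range (D + 1), h i (natDigit b (m + t * b ^ D) i)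
        = ∑ m ∈ Finset.range (b ^ D), ∑ t ∈ Finset.range b,
            (∏ i ∈ Finset.range D, h i (natDigit b m i)) * h D t := by
          refine Finset.sum_congr rfl fun m hm => Finset.sum_congr rfl fun t ht => ?_
          exact inner m hm t ht
      _ = (∑ m ∈ Finset.range (b ^ D), ∏ i ∈ Finset.range D, h i (natDigit b m i))
            * ∑ t ∈ Finset.range b, h D t := by
          rw [Finset.sum_mul]
          refine Finset.sum_congr rfl fun m _ => ?_
          rw [Finset.mul_sum]
      _ = (∏ i ∈ Finset.range D, ∑ t ∈ Finset.range b, h i t) * ∑ t ∈ Finset.range b, h D t := by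
          rw [ih]
      _ = ∏ i ∈ Finset.range (D + 1), ∑ t ∈ Finset.range b, h i t := by
          rw [Finset.prod_range_succ]

lemma sum_exp_mdickWt {b : ℕ} (hb : 2 ≤ b) (a l : ℝ) (D : ℕ) :
    ∑ k ∈ Finset.range (b ^ D), Real.exp (-(l * mdickWt b a k))
      = ∏ i ∈ Finset.range D,
          (1 + ((b : ℝ) - 1) * Real.exp (-(l * max ((i : ℝ) + 1 + a) 1))) := by
  have key : ∀ k ∈ Finset.range (b ^ D), Real.exp (-(l * mdickWt b a k))
      = ∏ i ∈ Finset.range D,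
          (if natDigit b k i = 0 then 1 else Real.exp (-(l * max ((i : ℝ) + 1 + a) 1))) := by
    intro k hk
    rw [Finset.mem_range] at hk
    rw [mdickWt_eq_sum_range hb a hk, Finset.mul_sum, ← Finset.sum_neg_distrib, Real.exp_sum]
    refine Finset.prod_congr rfl fun i _ => ?_
    by_cases hd : natDigit b k i = 0 <;> simp [hd]
  rw [Finset.sum_congr rfl key, sum_prod_digits hb (fun i t => if t = 0 then (1:ℝ) else Real.exp (-(l * max ((i : ℝ) + 1 + a) 1))) D]
  refine Finset.prod_congr rfl fun i _ => ?_
  rw [Finset.sum_ite, Finset.sum_const, Finset.sum_const]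
  have h1 : (Finset.range b).filter (fun t => t = 0) = {0} := by
    ext t
    simp only [Finset.mem_filter, Finset.mem_range, Finset.mem_singleton]
    omega
  have h2 : ((Finset.range b).filter (fun t => ¬ t = 0)).card = b - 1 := by
    have : (Finset.range b).filter (fun t => ¬ t = 0) = Finset.Ico 1 b := by
      ext t
      simp only [Finset.mem_filter, Finset.mem_range, Finset.mem_Ico]
      omega
    rw [this, Nat.card_Ico]
  rw [h1, h2]
  have : ((b - 1 : ℕ) : ℝ) = (b : ℝ) - 1 := by
    push_cast [Nat.cast_sub (by omega : 1 ≤ b)]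
    ring
  simp [this]

lemma prod_one_add_le_exp {ι : Type*} (s : Finset ι) (f : ι → ℝ) (hf : ∀ i ∈ s, 0 ≤ f i) :
    ∏ i ∈ s, (1 + f i) ≤ Real.exp (∑ i ∈ s, f i) := by
  rw [Real.exp_sum]
  refine Finset.prod_le_prod (fun i hi => by linarith [hf i hi]) (fun i hi => ?_)
  rw [add_comm]
  exact Real.add_one_le_exp _

lemma geom_sum_le_inv {q : ℝ} (h0 : 0 ≤ q) (h1 : q < 1) (n : ℕ) :
    ∑ i ∈ Finset.range n, q ^ i ≤ (1 - q)⁻¹ := by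
  have hq1 : q ≠ 1 := ne_of_lt h1
  have h2 : (0:ℝ) < 1 - q := by linarith
  have h3 : ∑ i ∈ Finset.range n, q ^ i = (1 - q ^ n) / (1 - q) := by
    rw [geom_sum_eq hq1, ← neg_sub 1 (q ^ n), ← neg_sub 1 q, neg_div_neg_eq]
  have h4 : 1 - q ^ n ≤ 1 := by nlinarith [pow_nonneg h0 n]
  rw [h3, ← one_div]
  exact div_le_div₀ zero_le_one h4 h2 le_rfl

lemma negCount_finite (a : ℝ) : {i : ℕ | 0 < i ∧ (i : ℝ) + a ≤ 1}.Finite := by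
  refine Set.Finite.subset (Set.finite_Iic ⌈1 - a⌉₊) fun i hi => ?_
  simp only [Set.mem_Iic]
  have h2 : (i : ℝ) ≤ 1 - a := by linarith [hi.2]
  exact_mod_cast h2.trans (Nat.le_ceil _)

lemma sum_exp_cost_le {wj l : ℝ} (hl : 0 < l) (D : ℕ) :
    ∑ i ∈ Finset.range D, Real.exp (-(l * max ((i : ℝ) + 1 + wj) 1))
      ≤ (negCount wj : ℝ) + Real.exp (-(l * max wj 0)) / (Real.exp l - 1) := by
  classical
  have hexpl : (1:ℝ) < Real.exp l := by
    rw [← Real.exp_zero]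
    exact Real.exp_lt_exp.mpr hl
  have hq0 : (0:ℝ) ≤ Real.exp (-l) := (Real.exp_pos _).le
  have hq1 : Real.exp (-l) < 1 := by
    rw [← Real.exp_zero]
    exact Real.exp_lt_exp.mpr (by linarith)
  rw [← Finset.sum_filter_add_sum_filter_not (Finset.range D) (fun i : ℕ => (i : ℝ) + 1 + wj ≤ 1)]
  have hA : ∑ i ∈ (Finset.range D).filter (fun i : ℕ => (i : ℝ) + 1 + wj ≤ 1),
      Real.exp (-(l * max ((i : ℝ) + 1 + wj) 1)) ≤ (negCount wj : ℝ) := by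
    have hterm : ∀ i ∈ (Finset.range D).filter (fun i : ℕ => (i : ℝ) + 1 + wj ≤ 1),
        Real.exp (-(l * max ((i : ℝ) + 1 + wj) 1)) ≤ 1 := by
      intro i _
      rw [Real.exp_le_one_iff]
      have h1 : (0:ℝ) < max ((i : ℝ) + 1 + wj) 1 := lt_of_lt_of_le zero_lt_one (le_max_right _ _)
      nlinarith
    calc _ ≤ ∑ _i ∈ (Finset.range D).filter (fun i : ℕ => (i : ℝ) + 1 + wj ≤ 1), (1:ℝ) :=
          Finset.sum_le_sum hterm
      _ = ((Finset.range D).filter (fun i : ℕ => (i : ℝ) + 1 + wj ≤ 1)).card := by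
          rw [Finset.sum_const]; simp
      _ ≤ (negCount wj : ℝ) := by
          rw [Nat.cast_le]
          unfold negCount
          rw [Set.ncard_eq_toFinset_card _ (negCount_finite wj)]
          have hinj : Set.InjOn (· + 1)
              (((Finset.range D).filter (fun i : ℕ => (i : ℝ) + 1 + wj ≤ 1)) : Set ℕ) :=
            fun x _ y _ h => by simpa using h
          calc ((Finset.range D).filter (fun i : ℕ => (i : ℝ) + 1 + wj ≤ 1)).card
              = (((Finset.range D).filter (fun i : ℕ => (i : ℝ) + 1 + wj ≤ 1)).image (· + 1)).card :=
                (Finset.card_image_of_injOn hinj).symm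
            _ ≤ _ := by
                apply Finset.card_le_card
                intro x hx
                rw [Finset.mem_image] at hx
                obtain ⟨i, hi, rfl⟩ := hx
                rw [Finset.mem_filter] at hi
                rw [Set.Finite.mem_toFinset]
                refine ⟨by omega, ?_⟩
                push_cast
                linarith [hi.2]
  have hB : ∑ i ∈ (Finset.range D).filter (fun i : ℕ => ¬ ((i : ℝ) + 1 + wj ≤ 1)),
      Real.exp (-(l * max ((i : ℝ) + 1 + wj) 1))
        ≤ Real.exp (-(l * max wj 0)) / (Real.exp l - 1) := by
    set i0 : ℕ := ⌈-wj⌉₊ with hi0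
    have hi0w : -wj ≤ (i0 : ℝ) := Nat.le_ceil _
    have hsub : (Finset.range D).filter (fun i : ℕ => ¬ ((i : ℝ) + 1 + wj ≤ 1)) ⊆ Finset.Ico i0 D := by
      intro i hi
      rw [Finset.mem_filter, Finset.mem_range] at hi
      rw [Finset.mem_Ico]
      refine ⟨?_, hi.1⟩
      rw [hi0, Nat.ceil_le]
      have := hi.2
      push_neg at this
      linarith
    have hmax : ∀ i ∈ Finset.Ico i0 D, max ((i : ℝ) + 1 + wj) 1 = (i : ℝ) + 1 + wj := by
      intro i hi
      rw [Finset.mem_Ico] at hi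
      have : (i0 : ℝ) ≤ (i : ℝ) := Nat.cast_le.mpr hi.1
      exact max_eq_left (by linarith)
    calc ∑ i ∈ (Finset.range D).filter (fun i : ℕ => ¬ ((i : ℝ) + 1 + wj ≤ 1)),
          Real.exp (-(l * max ((i : ℝ) + 1 + wj) 1))
        ≤ ∑ i ∈ Finset.Ico i0 D, Real.exp (-(l * max ((i : ℝ) + 1 + wj) 1)) :=
          Finset.sum_le_sum_of_subset_of_nonneg hsub (fun i _ _ => (Real.exp_pos _).le)
      _ = ∑ i ∈ Finset.Ico i0 D, Real.exp (-(l * ((i : ℝ) + 1 + wj))) := by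
          refine Finset.sum_congr rfl fun i hi => ?_
          rw [hmax i hi]
      _ = ∑ m ∈ Finset.range (D - i0), Real.exp (-(l * (((i0 + m : ℕ) : ℝ) + 1 + wj))) := by
          rw [Finset.sum_Ico_eq_sum_range]
      _ = ∑ m ∈ Finset.range (D - i0),
            Real.exp (-(l * ((i0 : ℝ) + 1 + wj))) * Real.exp (-l) ^ m := by
          refine Finset.sum_congr rfl fun m _ => ?_
          rw [← Real.exp_nat_mul, ← Real.exp_add]
          congr 1
          push_cast
          ring
      _ = Real.exp (-(l * ((i0 : ℝ) + 1 + wj))) * ∑ m ∈ Finset.range (D - i0), Real.exp (-l) ^ m := by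
          rw [Finset.mul_sum]
      _ ≤ Real.exp (-(l * ((i0 : ℝ) + 1 + wj))) * (1 - Real.exp (-l))⁻¹ := by
          refine mul_le_mul_of_nonneg_left (geom_sum_le_inv hq0 hq1 _) (Real.exp_pos _).le
      _ ≤ Real.exp (-(l * (1 + max wj 0))) * (1 - Real.exp (-l))⁻¹ := by
          refine mul_le_mul_of_nonneg_right ?_ (le_of_lt (inv_pos.mpr (by linarith)))
          rw [Real.exp_le_exp]
          have h1 : (0:ℝ) ≤ (i0 : ℝ) := Nat.cast_nonneg _
          have h2 : 1 + max wj 0 ≤ (i0 : ℝ) + 1 + wj := by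
            rcases le_total wj 0 with h | h
            · rw [max_eq_right h]; linarith
            · rw [max_eq_left h]; linarith
          nlinarith
      _ = Real.exp (-(l * max wj 0)) / (Real.exp l - 1) := by
          have e1 : Real.exp (-(l * (1 + max wj 0)))
              = Real.exp (-(l * max wj 0)) * Real.exp (-l) := by
            rw [← Real.exp_add]
            congr 1
            ring
          have e2 : Real.exp (-l) = (Real.exp l)⁻¹ := Real.exp_neg l
          rw [e1, e2]
          have h3 : Real.exp l ≠ 0 := (Real.exp_pos _).ne'
          have h4 : Real.exp l - 1 ≠ 0 := by linarith
          field_simp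
  linarith

lemma integrableOn_exp_neg_mul_rpow {c p : ℝ} (hc : 0 < c) (hp : 0 < p) :
    IntegrableOn (fun x : ℝ => Real.exp (-(c * x ^ p))) (Set.Ioi 0) := by
  have hg : IntegrableOn (fun z : ℝ => Real.exp (-z) * z ^ (1 / p - 1)) (Set.Ioi 0) :=
    Real.GammaIntegral_convergent (by positivity)
  set e : ℝ := 1 / p - 1 with he
  have hgc : IntegrableOn (fun y : ℝ => Real.exp (-(c * y)) * (c * y) ^ e) (Set.Ioi 0) := by
    have h := (integrableOn_Ioi_comp_mul_left_iff
      (fun z : ℝ => Real.exp (-z) * z ^ e) 0 hc).mpr (by simpa using hg)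
    simpa using h
  have hf' : IntegrableOn (fun y : ℝ => Real.exp (-(c * y)) * y ^ e) (Set.Ioi 0) := by
    have hone : c ^ (-e) * c ^ e = 1 := by
      rw [← Real.rpow_add hc]
      simp
    have h3 : IntegrableOn (fun y : ℝ => c ^ (-e) * (Real.exp (-(c * y)) * (c * y) ^ e))
        (Set.Ioi 0) := hgc.const_mul _
    refine h3.congr_fun ?_ measurableSet_Ioi
    intro y hy
    have hy0 : (0:ℝ) < y := hy
    simp only []
    rw [Real.mul_rpow hc.le hy0.le]
    calc c ^ (-e) * (Real.exp (-(c * y)) * (c ^ e * y ^ e))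
        = (c ^ (-e) * c ^ e) * (Real.exp (-(c * y)) * y ^ e) := by ring
      _ = Real.exp (-(c * y)) * y ^ e := by rw [hone, one_mul]
  have h2 := (integrableOn_Ioi_comp_rpow_iff'
    (fun y : ℝ => Real.exp (-(c * y)) * y ^ e) hp.ne').mpr hf'
  refine h2.congr_fun ?_ measurableSet_Ioi
  intro x hx
  have hx0 : (0:ℝ) < x := hx
  have hxe : (x ^ p : ℝ) ^ e = x ^ (p * e) := (Real.rpow_mul hx0.le p e).symm
  simp only [smul_eq_mul]
  rw [hxe]
  have hpe : p * e = 1 - p := by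
    rw [he]
    field_simp
  rw [hpe]
  calc x ^ (p - 1) * (Real.exp (-(c * x ^ p)) * x ^ (1 - p))
      = Real.exp (-(c * x ^ p)) * (x ^ (p - 1) * x ^ (1 - p)) := by ring
    _ = Real.exp (-(c * x ^ p)) := by
        rw [← Real.rpow_add hx0]
        norm_num

lemma sum_exp_growth_le {a r l : ℝ} (ha : 0 < a) (hr : 0 < r) (hl : 0 < l) (s : ℕ) :
    ∑ j ∈ Finset.range s, Real.exp (-(l * a * ((j : ℝ) + 1) ^ r))
      ≤ (l * a) ^ (-(1 / r)) * (r⁻¹ * Real.Gamma (1 / r)) := by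
  set c : ℝ := l * a with hc
  have hc0 : 0 < c := mul_pos hl ha
  set f : ℝ → ℝ := fun x => Real.exp (-(c * x ^ r)) with hf
  have hanti : AntitoneOn f (Icc (0:ℝ) (0 + (s:ℕ))) := by
    intro x hx y hy hxy
    rw [hf]
    simp only []
    rw [Real.exp_le_exp]
    have : x ^ r ≤ y ^ r := Real.rpow_le_rpow hx.1 hxy hr.le
    nlinarith
  have hsum := hanti.sum_le_integral
  have hL : ∑ j ∈ Finset.range s, Real.exp (-(l * a * ((j : ℝ) + 1) ^ r))
      = ∑ i ∈ Finset.range s, f (0 + ((i + 1 : ℕ) : ℝ)) := by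
    refine Finset.sum_congr rfl fun i _ => ?_
    rw [hf]
    simp only []
    congr 2
    push_cast
    rw [hc]; ring
  rw [hL]
  refine hsum.trans ?_
  have h0s : (0:ℝ) ≤ (s:ℝ) := Nat.cast_nonneg _
  rw [zero_add, intervalIntegral.integral_of_le h0s]
  have hIoc : ∫ x in Ioc (0:ℝ) (s:ℝ), f x ≤ ∫ x in Ioi (0:ℝ), f x := by
    refine setIntegral_mono_set (integrableOn_exp_neg_mul_rpow hc0 hr) ?_ ?_
    · exact Filter.Eventually.of_forall fun x => (Real.exp_pos _).le
    · exact (Ioc_subset_Ioi_self).eventuallyLE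
  refine hIoc.trans ?_
  have hval : ∫ x in Ioi (0:ℝ), f x = c ^ (-1 / r) * Real.Gamma (1 / r + 1) := by
    rw [hf]
    have h := integral_exp_neg_mul_rpow hr hc0
    simp_rw [neg_mul] at h
    exact h
  rw [hval, Real.Gamma_add_one (by positivity : (1:ℝ)/r ≠ 0)]
  apply le_of_eq
  simp [neg_div, one_div]

lemma sum_exp_max_le {a r l : ℝ} (w : ℕ → ℝ) (ha : 0 < a) (hr : 0 < r) (hl : 0 < l) {A : ℕ}
    (hgrow : ∀ j, A ≤ j → a * ((j : ℝ) + 1) ^ r ≤ w j) (s : ℕ) :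
    ∑ j ∈ Finset.range s, Real.exp (-(l * max (w j) 0))
      ≤ (A : ℝ) + (l * a) ^ (-(1 / r)) * (r⁻¹ * Real.Gamma (1 / r)) := by
  have hterm : ∀ j ∈ Finset.range s, Real.exp (-(l * max (w j) 0))
      ≤ (if j < A then (1:ℝ) else 0) + Real.exp (-(l * a * ((j : ℝ) + 1) ^ r)) := by
    intro j _
    by_cases hj : j < A
    · simp only [hj, if_true]
      have h1 : Real.exp (-(l * max (w j) 0)) ≤ 1 := by
        rw [Real.exp_le_one_iff]
        nlinarith [le_max_right (w j) 0]
      linarith [Real.exp_pos (-(l * a * ((j : ℝ) + 1) ^ r))]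
    · simp only [hj, if_false, zero_add]
      rw [Real.exp_le_exp]
      have h1 : a * ((j : ℝ) + 1) ^ r ≤ w j := hgrow j (le_of_not_gt hj)
      have h2 : a * ((j : ℝ) + 1) ^ r ≤ max (w j) 0 := le_trans h1 (le_max_left _ _)
      have h3 : l * (a * ((j : ℝ) + 1) ^ r) ≤ l * max (w j) 0 :=
        mul_le_mul_of_nonneg_left h2 hl.le
      rw [← mul_assoc] at h3
      linarith
  calc ∑ j ∈ Finset.range s, Real.exp (-(l * max (w j) 0))
      ≤ ∑ j ∈ Finset.range s,
          ((if j < A then (1:ℝ) else 0) + Real.exp (-(l * a * ((j : ℝ) + 1) ^ r))) :=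
        Finset.sum_le_sum hterm
    _ = (∑ j ∈ Finset.range s, if j < A then (1:ℝ) else 0)
          + ∑ j ∈ Finset.range s, Real.exp (-(l * a * ((j : ℝ) + 1) ^ r)) :=
        Finset.sum_add_distrib
    _ ≤ (A : ℝ) + (l * a) ^ (-(1 / r)) * (r⁻¹ * Real.Gamma (1 / r)) := by
        refine add_le_add ?_ (sum_exp_growth_le ha hr hl s)
        rw [Finset.sum_boole]
        rw [Nat.cast_le]
        calc ((Finset.range s).filter (fun j => j < A)).card
            ≤ (Finset.range A).card := by
              apply Finset.card_le_card
              intro x hx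
              rw [Finset.mem_filter] at hx
              rw [Finset.mem_range]
              exact hx.2
          _ = A := Finset.card_range A

lemma mdickWt_nonneg (b : ℕ) (a : ℝ) (k : ℕ) : 0 ≤ mdickWt b a k := by
  refine Finset.sum_nonneg fun i _ => ?_
  split_ifs
  · exact le_trans zero_le_one (le_max_right _ _)
  · exact le_refl 0

lemma le_mdickWt {b : ℕ} (hb : 2 ≤ b) (a : ℝ) {k : ℕ} (hk : k ≠ 0) :
    max ((Nat.log b k : ℝ) + 1 + a) 1 ≤ mdickWt b a k := by
  have hb1 : 1 < b := by omega
  have hmem : Nat.log b k ∈ Finset.range k := Finset.mem_range.mpr (Nat.log_lt_self b hk)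
  have hpow : 0 < b ^ Nat.log b k := Nat.pow_pos (by omega)
  have hdig : natDigit b k (Nat.log b k) ≠ 0 := by
    unfold natDigit
    have h1 : 1 ≤ k / b ^ Nat.log b k :=
      (Nat.one_le_div_iff hpow).mpr (Nat.pow_log_le_self b hk)
    have h2 : k / b ^ Nat.log b k < b := by
      rw [Nat.div_lt_iff_lt_mul hpow]
      calc k < b ^ (Nat.log b k).succ := Nat.lt_pow_succ_log_self hb1 k
        _ = b * b ^ Nat.log b k := by rw [pow_succ, mul_comm]
    rw [Nat.mod_eq_of_lt h2]
    omega
  have := Finset.single_le_sum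
    (f := fun i => if natDigit b k i ≠ 0 then max ((i : ℝ) + 1 + a) 1 else 0)
    (fun i _ => by
      split_ifs
      · exact le_trans zero_le_one (le_max_right _ _)
      · exact le_refl 0) hmem
  rw [if_pos hdig] at this
  exact this

lemma mdickWt_ge_one {b : ℕ} (hb : 2 ≤ b) (a : ℝ) {k : ℕ} (hk : k ≠ 0) :
    1 ≤ mdickWt b a k :=
  le_trans (le_max_right _ _) (le_mdickWt hb a hk)

lemma negCount_eq_zero {x : ℝ} (hx : 0 < x) : negCount x = 0 := by
  unfold negCount
  convert Set.ncard_empty ℕ using 2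
  ext i
  simp only [Set.mem_setOf_eq, Set.mem_empty_iff_false, iff_false]
  rintro ⟨h1, h2⟩
  have : (1 : ℝ) ≤ (i : ℝ) := by exact_mod_cast h1
  linarith

end AuxStatement17

/-- under the growth condition `a_j ≥ a·j^r` for `j > A`, one has
`V_{s,a}(M) ≤ exp(C·M^{(r+1)/(2r+1)})` for all `s` and all `M ≥ 0`, with the explicit
constant `C` (the weight sequence `w` is indexed from `0`, i.e. `w (j-1)` is the paper's
`a_j`, so the growth condition reads `w j ≥ a·(j+1)^r` for `j ≥ A`). -/
theorem statement17 (b : ℕ) (hb : 2 ≤ b) (w : ℕ → ℝ) (hw : Monotone w)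
    (a r : ℝ) (ha : 0 < a) (hr : 0 < r) (A : ℕ)
    (hgrow : ∀ j : ℕ, A ≤ j → a * ((j : ℝ) + 1) ^ r ≤ w j)
    (C : ℝ)
    (hC : C = ((b : ℝ) - 1) * ((A : ℝ) + r⁻¹ * Real.Gamma (1 / r) * a ^ (-(1 / r))) +
      ((b : ℝ) - 1) * (∑' j : ℕ, (negCount (w j) : ℝ)) + 1) :
    ∀ s : ℕ, 0 < s → ∀ M : ℝ, 0 ≤ M →
      (Set.ncard {k : Fin s → ℕ | mdickWtV b (fun j : Fin s => w j) k ≤ M} : ℝ) ≤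
        Real.exp (C * M ^ ((r + 1) / (2 * r + 1))) := by
  intro s hs M hM
  have hb2 : (2:ℝ) ≤ (b:ℝ) := by exact_mod_cast hb
  have hb1 : (1:ℝ) ≤ (b:ℝ) - 1 := by linarith
  have hbm : (0:ℝ) ≤ (b:ℝ) - 1 := by linarith
  have hGamma : 0 < Real.Gamma (1/r) := Real.Gamma_pos_of_pos (by positivity)
  have hanr : (0:ℝ) ≤ a ^ (-(1/r)) := Real.rpow_nonneg ha.le _
  have hG0 : (0:ℝ) ≤ r⁻¹ * Real.Gamma (1/r) * a ^ (-(1/r)) :=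
    mul_nonneg (mul_nonneg (inv_nonneg.mpr hr.le) hGamma.le) hanr
  have hT0 : (0:ℝ) ≤ ∑' j : ℕ, (negCount (w j) : ℝ) := tsum_nonneg fun j => Nat.cast_nonneg _
  have hA0 : (0:ℝ) ≤ (A:ℝ) := Nat.cast_nonneg _
  have hC0 : 0 ≤ C := by
    rw [hC]
    nlinarith
  have hθ0 : (0:ℝ) ≤ (r+1)/(2*r+1) := by positivity
  have hMθ0 : (0:ℝ) ≤ M ^ ((r+1)/(2*r+1)) := Real.rpow_nonneg hM _
  rcases lt_or_ge M 1 with hM1 | hM1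
  · have hsub : {k : Fin s → ℕ | mdickWtV b (fun j : Fin s => w j) k ≤ M}
        ⊆ {fun _ => 0} := by
      intro k hk
      simp only [Set.mem_setOf_eq] at hk
      simp only [Set.mem_singleton_iff]
      funext j
      by_contra hkj
      have h1 : (1:ℝ) ≤ mdickWt b (w ↑j) (k j) := mdickWt_ge_one hb _ hkj
      have h2 : mdickWt b (w ↑j) (k j) ≤ mdickWtV b (fun j : Fin s => w j) k :=
        Finset.single_le_sum (f := fun j : Fin s => mdickWt b (w ↑j) (k j))
          (fun i _ => mdickWt_nonneg b _ _) (Finset.mem_univ j)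
      linarith
    have hle : Set.ncard {k : Fin s → ℕ | mdickWtV b (fun j : Fin s => w j) k ≤ M} ≤ 1 := by
      have := Set.ncard_le_ncard hsub (Set.finite_singleton _)
      simpa using this
    calc (Set.ncard {k : Fin s → ℕ | mdickWtV b (fun j : Fin s => w j) k ≤ M} : ℝ)
        ≤ 1 := by exact_mod_cast hle
      _ ≤ Real.exp (C * M ^ ((r + 1) / (2 * r + 1))) := by
          have h := Real.exp_le_exp.mpr (mul_nonneg hC0 hMθ0)
          rwa [Real.exp_zero] at h
  · have hM0 : (0:ℝ) < M := lt_of_lt_of_le zero_lt_one hM1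
    set l : ℝ := M ^ (-(r / (2*r+1))) with hldef
    have hl0 : 0 < l := Real.rpow_pos_of_pos hM0 _
    set D : ℕ := ⌈M - w 0⌉₊ with hDdef
    set V : Set (Fin s → ℕ) := {k : Fin s → ℕ | mdickWtV b (fun j : Fin s => w j) k ≤ M}
      with hVdef
    have hbox : ∀ k ∈ V, ∀ j : Fin s, k j < b ^ D := by
      intro k hk j
      by_contra hkj
      push_neg at hkj
      have hkj0 : k j ≠ 0 := by
        have : 0 < b ^ D := Nat.pow_pos (by omega)
        omega
      have h1 : max ((Nat.log b (k j) : ℝ) + 1 + w ↑j) 1 ≤ mdickWt b (w ↑j) (k j) :=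
        le_mdickWt hb _ hkj0
      have h1' : (Nat.log b (k j) : ℝ) + 1 + w ↑j ≤ mdickWt b (w ↑j) (k j) :=
        le_trans (le_max_left _ _) h1
      have h2 : mdickWt b (w ↑j) (k j) ≤ mdickWtV b (fun j : Fin s => w j) k :=
        Finset.single_le_sum (f := fun j : Fin s => mdickWt b (w ↑j) (k j))
          (fun i _ => mdickWt_nonneg b _ _) (Finset.mem_univ j)
      have hkM : mdickWtV b (fun j : Fin s => w j) k ≤ M := hk
      have hlog : D ≤ Nat.log b (k j) := (Nat.le_log_iff_pow_le (by omega) hkj0).mpr hkj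
      have hlogR : (D:ℝ) ≤ (Nat.log b (k j) : ℝ) := Nat.cast_le.mpr hlog
      have hwj : w 0 ≤ w ↑j := hw (Nat.zero_le _)
      have hceil : M - w 0 ≤ (D:ℝ) := by rw [hDdef]; exact Nat.le_ceil _
      linarith
    set B : Finset (Fin s → ℕ) := Fintype.piFinset (fun _ : Fin s => Finset.range (b ^ D))
      with hBdef
    have hVB : V ⊆ ↑B := by
      intro k hk
      rw [Finset.mem_coe, hBdef, Fintype.mem_piFinset]
      intro j
      rw [Finset.mem_range]
      exact hbox k hk j
    have hVfin : V.Finite := Set.Finite.subset B.finite_toSet hVB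
    have hchern : (V.ncard : ℝ)
        ≤ ∑ k ∈ B, Real.exp (l * M - l * mdickWtV b (fun j : Fin s => w j) k) := by
      rw [Set.ncard_eq_toFinset_card _ hVfin]
      calc ((hVfin.toFinset.card : ℕ) : ℝ) = ∑ _k ∈ hVfin.toFinset, (1:ℝ) := by
            rw [Finset.sum_const, nsmul_eq_mul, mul_one]
        _ ≤ ∑ k ∈ hVfin.toFinset,
              Real.exp (l * M - l * mdickWtV b (fun j : Fin s => w j) k) := by
            refine Finset.sum_le_sum fun k hk => ?_
            rw [Set.Finite.mem_toFinset] at hk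
            have hkM : mdickWtV b (fun j : Fin s => w j) k ≤ M := hk
            have h9 : (0:ℝ) ≤ l * M - l * mdickWtV b (fun j : Fin s => w j) k := by nlinarith
            have h := Real.exp_le_exp.mpr h9
            rwa [Real.exp_zero] at h
        _ ≤ ∑ k ∈ B, Real.exp (l * M - l * mdickWtV b (fun j : Fin s => w j) k) := by
            refine Finset.sum_le_sum_of_subset_of_nonneg ?_ fun _ _ _ => (Real.exp_pos _).le
            intro k hk
            rw [Set.Finite.mem_toFinset] at hk
            exact hVB hk
    have hprod : ∑ k ∈ B, Real.exp (l * M - l * mdickWtV b (fun j : Fin s => w j) k)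
        = Real.exp (l * M) * ∏ j : Fin s,
            ∑ t ∈ Finset.range (b ^ D), Real.exp (-(l * mdickWt b (w ↑j) t)) := by
      have h1 : ∀ k : Fin s → ℕ, Real.exp (l * M - l * mdickWtV b (fun j : Fin s => w j) k)
          = Real.exp (l * M) * ∏ j : Fin s, Real.exp (-(l * mdickWt b (w ↑j) (k j))) := by
        intro k
        rw [← Real.exp_sum, ← Real.exp_add]
        congr 1
        unfold mdickWtV
        simp only []
        rw [Finset.mul_sum, Finset.sum_neg_distrib]
        ring
      calc ∑ k ∈ B, Real.exp (l * M - l * mdickWtV b (fun j : Fin s => w j) k)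
          = ∑ k ∈ B, Real.exp (l * M) * ∏ j : Fin s, Real.exp (-(l * mdickWt b (w ↑j) (k j))) :=
            Finset.sum_congr rfl fun k _ => h1 k
        _ = Real.exp (l * M)
              * ∑ k ∈ B, ∏ j : Fin s, Real.exp (-(l * mdickWt b (w ↑j) (k j))) := by
            rw [Finset.mul_sum]
        _ = _ := by
            rw [hBdef]
            rw [Finset.sum_prod_piFinset (Finset.range (b ^ D))
              (fun (j : Fin s) (t : ℕ) => Real.exp (-(l * mdickWt b (w ↑j) t)))]
    have hfac : ∀ j : Fin s, ∑ t ∈ Finset.range (b ^ D), Real.exp (-(l * mdickWt b (w ↑j) t))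
        ≤ Real.exp (((b:ℝ) - 1) * ((negCount (w ↑j) : ℝ)
            + Real.exp (-(l * max (w ↑j) 0)) / (Real.exp l - 1))) := by
      intro j
      rw [sum_exp_mdickWt hb (w ↑j) l D]
      have h1 := prod_one_add_le_exp (Finset.range D)
        (fun i => ((b:ℝ) - 1) * Real.exp (-(l * max ((i:ℝ) + 1 + w ↑j) 1)))
        (fun i _ => mul_nonneg hbm (Real.exp_pos _).le)
      refine h1.trans ?_
      rw [Real.exp_le_exp, ← Finset.mul_sum]
      exact mul_le_mul_of_nonneg_left (sum_exp_cost_le hl0 D) hbm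
    have hfacpos : ∀ j : Fin s,
        0 ≤ ∑ t ∈ Finset.range (b ^ D), Real.exp (-(l * mdickWt b (w ↑j) t)) :=
      fun j => Finset.sum_nonneg fun t _ => (Real.exp_pos _).le
    set Sn : ℝ := ∑ j ∈ Finset.range s, (negCount (w j) : ℝ) with hSn
    set Se : ℝ := ∑ j ∈ Finset.range s, Real.exp (-(l * max (w j) 0)) with hSe
    have hprodle : ∏ j : Fin s, ∑ t ∈ Finset.range (b ^ D), Real.exp (-(l * mdickWt b (w ↑j) t))
        ≤ Real.exp (((b:ℝ) - 1) * (Sn + Se / (Real.exp l - 1))) := by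
      calc ∏ j : Fin s, ∑ t ∈ Finset.range (b ^ D), Real.exp (-(l * mdickWt b (w ↑j) t))
          ≤ ∏ j : Fin s, Real.exp (((b:ℝ) - 1) * ((negCount (w ↑j) : ℝ)
              + Real.exp (-(l * max (w ↑j) 0)) / (Real.exp l - 1))) :=
            Finset.prod_le_prod (fun j _ => hfacpos j) (fun j _ => hfac j)
        _ = Real.exp (∑ j : Fin s, ((b:ℝ) - 1) * ((negCount (w ↑j) : ℝ)
              + Real.exp (-(l * max (w ↑j) 0)) / (Real.exp l - 1))) :=
            (Real.exp_sum _ _).symm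
        _ = Real.exp (((b:ℝ) - 1) * (Sn + Se / (Real.exp l - 1))) := by
            congr 1
            rw [← Finset.mul_sum]
            congr 1
            rw [Finset.sum_add_distrib, ← Finset.sum_div]
            congr 1
            · rw [hSn]
              exact Fin.sum_univ_eq_sum_range (fun j => ((negCount (w j) : ℕ) : ℝ)) s
            · congr 1
              rw [hSe]
              exact Fin.sum_univ_eq_sum_range (fun j => Real.exp (-(l * max (w j) 0))) s
    have hmain : (V.ncard : ℝ)
        ≤ Real.exp (l * M + ((b:ℝ) - 1) * (Sn + Se / (Real.exp l - 1))) := by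
      calc (V.ncard : ℝ)
          ≤ ∑ k ∈ B, Real.exp (l * M - l * mdickWtV b (fun j : Fin s => w j) k) := hchern
        _ = Real.exp (l * M) * ∏ j : Fin s,
              ∑ t ∈ Finset.range (b ^ D), Real.exp (-(l * mdickWt b (w ↑j) t)) := hprod
        _ ≤ Real.exp (l * M) * Real.exp (((b:ℝ) - 1) * (Sn + Se / (Real.exp l - 1))) :=
            mul_le_mul_of_nonneg_left hprodle (Real.exp_pos _).le
        _ = Real.exp (l * M + ((b:ℝ) - 1) * (Sn + Se / (Real.exp l - 1))) :=
            (Real.exp_add _ _).symm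
    have h2r : (0:ℝ) < 2*r+1 := by linarith
    have hexpo1 : l * M = M ^ ((r+1)/(2*r+1)) := by
      calc l * M = M ^ (-(r/(2*r+1))) * M ^ (1:ℝ) := by rw [hldef, Real.rpow_one]
        _ = M ^ (-(r/(2*r+1)) + 1) := (Real.rpow_add hM0 _ _).symm
        _ = M ^ ((r+1)/(2*r+1)) := by
            congr 1
            field_simp
            ring
    have hexpl1 : (0:ℝ) < Real.exp l - 1 := by
      have : (1:ℝ) < Real.exp l := by
        rw [← Real.exp_zero]
        exact Real.exp_lt_exp.mpr hl0
      linarith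
    have hinvle : (Real.exp l - 1)⁻¹ ≤ l⁻¹ := by
      have h1 : l ≤ Real.exp l - 1 := by linarith [Real.add_one_le_exp l]
      exact inv_anti₀ hl0 h1
    have hlinv : l⁻¹ = M ^ (r/(2*r+1)) := by
      rw [hldef, Real.rpow_neg hM0.le, inv_inv]
    have hlr : l ^ (-(1/r)) = M ^ (1/(2*r+1)) := by
      rw [hldef, ← Real.rpow_mul hM0.le]
      congr 1
      field_simp
    have hmulr : (l * a) ^ (-(1/r)) = l ^ (-(1/r)) * a ^ (-(1/r)) := Real.mul_rpow hl0.le ha.le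
    have hMθ1 : (1:ℝ) ≤ M ^ ((r+1)/(2*r+1)) := by
      have := Real.rpow_le_rpow_of_exponent_le hM1 hθ0
      rwa [Real.rpow_zero] at this
    have hrθ : M ^ (r/(2*r+1)) ≤ M ^ ((r+1)/(2*r+1)) :=
      Real.rpow_le_rpow_of_exponent_le hM1 ((div_le_div_iff_of_pos_right h2r).mpr (by linarith))
    have hprodθ : M ^ (1/(2*r+1)) * M ^ (r/(2*r+1)) = M ^ ((r+1)/(2*r+1)) := by
      rw [← Real.rpow_add hM0]
      congr 1
      rw [← add_div]
      ring
    have hSnT : Sn ≤ ∑' j : ℕ, (negCount (w j) : ℝ) := by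
      rw [hSn]
      refine Summable.sum_le_tsum (Finset.range s) (fun j _ => Nat.cast_nonneg _) ?_
      refine summable_of_ne_finset_zero (s := Finset.range A) ?_
      intro j hj
      rw [Finset.mem_range, not_lt] at hj
      have hwj : 0 < w j := lt_of_lt_of_le
        (mul_pos ha (Real.rpow_pos_of_pos (by positivity) r)) (hgrow j hj)
      rw [negCount_eq_zero hwj, Nat.cast_zero]
    have hSn0 : 0 ≤ Sn := by
      rw [hSn]
      exact Finset.sum_nonneg fun j _ => Nat.cast_nonneg _
    have hSeB : Se ≤ (A:ℝ) + (l*a) ^ (-(1/r)) * (r⁻¹ * Real.Gamma (1/r)) := by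
      rw [hSe]
      exact sum_exp_max_le w ha hr hl0 hgrow s
    have hSe0 : 0 ≤ Se := by
      rw [hSe]
      exact Finset.sum_nonneg fun j _ => (Real.exp_pos _).le
    have hla0 : (0:ℝ) ≤ (l*a) ^ (-(1/r)) := Real.rpow_nonneg (mul_nonneg hl0.le ha.le) _
    have e1 : Se / (Real.exp l - 1)
        ≤ ((A:ℝ) + (l*a) ^ (-(1/r)) * (r⁻¹ * Real.Gamma (1/r))) * l⁻¹ := by
      rw [div_eq_mul_inv]
      refine mul_le_mul hSeB hinvle (inv_nonneg.mpr hexpl1.le) ?_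
      refine add_nonneg hA0 (mul_nonneg hla0 ?_)
      exact mul_nonneg (inv_nonneg.mpr hr.le) hGamma.le
    have e2 : ((A:ℝ) + (l*a) ^ (-(1/r)) * (r⁻¹ * Real.Gamma (1/r))) * l⁻¹
        ≤ ((A:ℝ) + r⁻¹ * Real.Gamma (1/r) * a ^ (-(1/r))) * M ^ ((r+1)/(2*r+1)) := by
      rw [hmulr, hlr, hlinv]
      calc ((A:ℝ) + M ^ (1/(2*r+1)) * a ^ (-(1/r)) * (r⁻¹ * Real.Gamma (1/r)))
              * M ^ (r/(2*r+1))
          = (A:ℝ) * M ^ (r/(2*r+1)) + (r⁻¹ * Real.Gamma (1/r) * a ^ (-(1/r)))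
              * (M ^ (1/(2*r+1)) * M ^ (r/(2*r+1))) := by ring
        _ = (A:ℝ) * M ^ (r/(2*r+1)) + (r⁻¹ * Real.Gamma (1/r) * a ^ (-(1/r)))
              * M ^ ((r+1)/(2*r+1)) := by rw [hprodθ]
        _ ≤ (A:ℝ) * M ^ ((r+1)/(2*r+1)) + (r⁻¹ * Real.Gamma (1/r) * a ^ (-(1/r)))
              * M ^ ((r+1)/(2*r+1)) :=
            add_le_add (mul_le_mul_of_nonneg_left hrθ hA0) le_rfl
        _ = ((A:ℝ) + r⁻¹ * Real.Gamma (1/r) * a ^ (-(1/r))) * M ^ ((r+1)/(2*r+1)) := by ring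
    have e3 : Sn ≤ (∑' j : ℕ, (negCount (w j) : ℝ)) * M ^ ((r+1)/(2*r+1)) := by
      calc Sn ≤ ∑' j : ℕ, (negCount (w j) : ℝ) := hSnT
        _ = (∑' j : ℕ, (negCount (w j) : ℝ)) * 1 := (mul_one _).symm
        _ ≤ (∑' j : ℕ, (negCount (w j) : ℝ)) * M ^ ((r+1)/(2*r+1)) :=
            mul_le_mul_of_nonneg_left hMθ1 hT0
    have e4 : Se / (Real.exp l - 1)
        ≤ ((A:ℝ) + r⁻¹ * Real.Gamma (1/r) * a ^ (-(1/r))) * M ^ ((r+1)/(2*r+1)) := e1.trans e2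
    have hkey : l * M + ((b:ℝ) - 1) * (Sn + Se / (Real.exp l - 1))
        ≤ C * M ^ ((r + 1) / (2 * r + 1)) := by
      calc l * M + ((b:ℝ) - 1) * (Sn + Se / (Real.exp l - 1))
          = M ^ ((r+1)/(2*r+1)) + ((b:ℝ) - 1) * Sn
            + ((b:ℝ) - 1) * (Se / (Real.exp l - 1)) := by rw [hexpo1]; ring
        _ ≤ M ^ ((r+1)/(2*r+1))
            + ((b:ℝ) - 1) * ((∑' j : ℕ, (negCount (w j) : ℝ)) * M ^ ((r+1)/(2*r+1)))
            + ((b:ℝ) - 1) * (((A:ℝ) + r⁻¹ * Real.Gamma (1/r) * a ^ (-(1/r)))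
                * M ^ ((r+1)/(2*r+1))) := by
            refine add_le_add (add_le_add le_rfl (mul_le_mul_of_nonneg_left e3 hbm))
              (mul_le_mul_of_nonneg_left e4 hbm)
        _ = (((b:ℝ) - 1) * ((A:ℝ) + r⁻¹ * Real.Gamma (1 / r) * a ^ (-(1 / r)))
              + ((b:ℝ) - 1) * (∑' j : ℕ, (negCount (w j) : ℝ)) + 1)
            * M ^ ((r + 1) / (2 * r + 1)) := by ring
        _ = C * M ^ ((r + 1) / (2 * r + 1)) := by rw [hC]
    calc (V.ncard : ℝ)
        ≤ Real.exp (l * M + ((b:ℝ) - 1) * (Sn + Se / (Real.exp l - 1))) := hmain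
      _ ≤ Real.exp (C * M ^ ((r + 1) / (2 * r + 1))) := Real.exp_le_exp.mpr hkey

end
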